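/- Let C and D be reflexive digraph cycles with D non-contractible of length n, let φ be a monotone map, let φ → φ' be a non-refinable up edge of Hom(C,D), and let T be the set of vertices that move up via φφ'. If T contains both endpoints of an edge c_i c_{i+1} of C that is increasing under φ, then c_i c_{i+1} is a backwards (non-symmetric) edge of C, and the edge between φ(c_{i+1}) and φ(c_{i+1})+1 is a symmetric edge of D. -/

import Mathlib

/-
An arc of `Hom(C, D)` from `φ` to `φ'` sends the loop at `c` to an arc `φ c → φ' c`, so every vertex
that moves up sits at the tail of a forward edge of `D`. If the increasing edge `c_i c_{i+1}` carried
a forward arc, it would be sent to an arc `φ c_i → φ c_i + 2`, which a non-contractible `D` does not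
have; so that edge is backward. The homomorphism `φ'` then sends the arc `c_{i+1} → c_i` to
`φ c_{i+1} + 1 → φ c_{i+1}`, so the edge of `D` at `φ c_{i+1}` is also backward, hence symmetric.
-/

open scoped Classical

namespace Recon

/-- Orientation letters for edges of a digraph cycle: `+`, `-`, `*`. -/
inductive Orient : Type
  | plus
  | minus
  | star
deriving DecidableEq

/-- A forward arc is allowed along an edge with this orientation letter. -/
def Orient.fwd : Orient → Prop
  | Orient.plus => True
  | Orient.minus => False
  | Orient.star => True

/-- A backward arc is allowed along an edge with this orientation letter. -/
def Orient.bwd : Orient → Prop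
  | Orient.plus => False
  | Orient.minus => True
  | Orient.star => True

/-- The arc relation of the reflexive digraph cycle on `ZMod m` whose orientation
string is `f`, where `f c` is the orientation of the edge from `c` to `c + 1`. -/
def cycRel {m : ℕ} (f : ZMod m → Orient) (u v : ZMod m) : Prop :=
  u = v ∨ (v = u + 1 ∧ (f u).fwd) ∨ (u = v + 1 ∧ (f v).bwd)

/-- `φ` is a digraph homomorphism. -/
def IsHom {α β : Type*} (rG : α → α → Prop) (rH : β → β → Prop) (φ : α → β) : Prop :=
  ∀ u v, rG u v → rH (φ u) (φ v)

/-- The arc relation of the Hom-graph `Hom(G,H)`. -/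
def HomArc {α β : Type*} (rG : α → α → Prop) (rH : β → β → Prop) (φ ψ : α → β) : Prop :=
  ∀ u v, rG u v → rH (φ u) (ψ v)

/-- `φψ` is an edge of the Hom-graph. -/
def HomEdge {α β : Type*} (rG : α → α → Prop) (rH : β → β → Prop) (φ ψ : α → β) : Prop :=
  HomArc rG rH φ ψ ∨ HomArc rG rH ψ φ

/-- The contribution of the edge `c (c+1)` of `C` to the increase of `φ`:
`1` if increasing, `-1` if decreasing, `0` if stationary. -/
def edgeVal {m n : ℕ} (φ : ZMod m → ZMod n) (c : ZMod m) : ℤ :=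
  if φ (c + 1) = φ c + 1 then 1 else if φ (c + 1) = φ c - 1 then -1 else 0

/-- The increase of a map between cycles: #increasing − #decreasing edges. -/
def increase {m n : ℕ} (φ : ZMod m → ZMod n) : ℤ :=
  ∑ j ∈ Finset.range m, edgeVal φ ((j : ℕ) : ZMod m)

/-- The increase of the subpath `c_a … c_{a+L}`. -/
def partialInc {m n : ℕ} (φ : ZMod m → ZMod n) (a : ZMod m) (L : ℕ) : ℤ :=
  ∑ j ∈ Finset.range L, edgeVal φ (a + ((j : ℕ) : ZMod m))

/-- `φ` has wind `w`, i.e. its increase is `w * n`. -/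
def HasWind {m n : ℕ} (φ : ZMod m → ZMod n) (w : ℤ) : Prop :=
  increase φ = w * (n : ℤ)

/-- A reflexive digraph cycle is non-contractible if it has length at least 4
or is a directed 3-cycle. -/
def NonContractible {n : ℕ} (f : ZMod n → Orient) : Prop :=
  4 ≤ n ∨ (n = 3 ∧ ((∀ i, f i = Orient.plus) ∨ (∀ i, f i = Orient.minus)))

/-- `φ` is increasing: every edge increasing or stationary, not all stationary. -/
def IncMap {m n : ℕ} (φ : ZMod m → ZMod n) : Prop :=
  (∀ c, φ (c + 1) = φ c + 1 ∨ φ (c + 1) = φ c) ∧ ∃ c, φ (c + 1) = φ c + 1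

/-- `φ` is decreasing: every edge decreasing. -/
def DecMap {m n : ℕ} (φ : ZMod m → ZMod n) : Prop :=
  ∀ c, φ (c + 1) = φ c - 1

/-- `φ` is monotone: increasing or decreasing. -/
def MonMap {m n : ℕ} (φ : ZMod m → ZMod n) : Prop :=
  IncMap φ ∨ DecMap φ

/-- `φ` is monotone in the weak sense where constant maps also count. -/
def MonOrConst {m n : ℕ} (φ : ZMod m → ZMod n) : Prop :=
  (∀ c, φ (c + 1) = φ c + 1 ∨ φ (c + 1) = φ c) ∨ DecMap φ

/-- `Y ≤* X`: `Y` is a `*`-substring of `X`, via a strictly increasing selection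
function `α` with `Y i = X (α i)` unless `Y i = *`. -/
def StarSub {p q : ℕ} (Y : Fin p → Orient) (X : Fin q → Orient) : Prop :=
  ∃ α : Fin p → Fin q, StrictMono α ∧ ∀ i, Y i = X (α i) ∨ Y i = Orient.star

/-- The orientation string of the (pointed) cycle `f`. -/
def cycStr {m : ℕ} (f : ZMod m → Orient) : Fin m → Orient :=
  fun j => f ((j : ℕ) : ZMod m)

/-- The orientation string `σ^i(Y^k)` = `(σ^i Y)^k`: the `i`-th shift of the
`k`-fold concatenation of the string of the cycle `fY`. -/
def shiftPowStr {s : ℕ} (fY : ZMod s → Orient) (k : ℕ) (i : ZMod s) :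
    Fin (k * s) → Orient :=
  fun j => fY (i + ((j : ℕ) : ZMod s))

/-- The orientation string `σ^i(Y)^k y_{i+1}` : the `i`-th shift of the `k`-fold
concatenation of the string of `fY`, extended by its own first letter. -/
def shiftPowExtStr {s : ℕ} (fY : ZMod s → Orient) (k : ℕ) (i : ZMod s) :
    Fin (k * s + 1) → Orient :=
  fun j => fY (i + ((j : ℕ) : ZMod s))

/-- Every vertex that moves from `φ` to `ψ`, moves up. -/
def MovesUpOnly {m n : ℕ} (φ ψ : ZMod m → ZMod n) : Prop :=
  ∀ c, ψ c = φ c ∨ ψ c = φ c + 1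

/-- Every vertex that moves from `φ` to `ψ`, moves down. -/
def MovesDownOnly {m n : ℕ} (φ ψ : ZMod m → ZMod n) : Prop :=
  ∀ c, ψ c = φ c ∨ ψ c = φ c - 1

/-- `φψ` is an up edge of the Hom-graph. -/
def UpEdge {m n : ℕ} (rC : ZMod m → ZMod m → Prop) (rD : ZMod n → ZMod n → Prop)
    (φ ψ : ZMod m → ZMod n) : Prop :=
  HomEdge rC rD φ ψ ∧ MovesUpOnly φ ψ

/-- `φ` and `ψ` are joined by a path (walk) inside the induced subgraph on `S`. -/
def ConnIn {m n : ℕ} (rC : ZMod m → ZMod m → Prop) (rD : ZMod n → ZMod n → Prop)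
    (S : Set (ZMod m → ZMod n)) (φ ψ : ZMod m → ZMod n) : Prop :=
  Relation.ReflTransGen (fun a b => a ∈ S ∧ b ∈ S ∧ HomEdge rC rD a b) φ ψ

/-- `ψ` is reachable from `φ` by a path of up edges inside `S`. -/
def UpReachIn {m n : ℕ} (rC : ZMod m → ZMod m → Prop) (rD : ZMod n → ZMod n → Prop)
    (S : Set (ZMod m → ZMod n)) (φ ψ : ZMod m → ZMod n) : Prop :=
  Relation.ReflTransGen (fun a b => a ∈ S ∧ b ∈ S ∧ UpEdge rC rD a b) φ ψ

/-- One step of a path of up edges between homomorphisms. -/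
def UpStep {m n : ℕ} (rC : ZMod m → ZMod m → Prop) (rD : ZMod n → ZMod n → Prop)
    (φ ψ : ZMod m → ZMod n) : Prop :=
  IsHom rC rD φ ∧ IsHom rC rD ψ ∧ UpEdge rC rD φ ψ

/-- The set of vertices on which `φ` and `φ'` differ. -/
def Neq {α β : Type*} (φ φ' : α → β) : Set α := {g | φ g ≠ φ' g}

/-- The map `φ_T`, agreeing with `φ'` on `T` and with `φ` elsewhere. -/
noncomputable def refineMap {α β : Type*} (φ φ' : α → β) (T : Set α) : α → β :=
  fun g => if g ∈ T then φ' g else φ g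

/-- The edge `φφ'` is non-refinable: no nonempty proper subset `T` of `Neq φ φ'`
yields a homomorphism `φ_T`. -/
def NonRefinable {α β : Type*} (rG : α → α → Prop) (rH : β → β → Prop)
    (φ φ' : α → β) : Prop :=
  ¬ ∃ T : Set α, T.Nonempty ∧ T ⊂ Neq φ φ' ∧ IsHom rG rH (refineMap φ φ' T)

/-- `T` is a strong component of the digraph `r`. -/
def IsStrongComponent {α : Type*} (r : α → α → Prop) (T : Set α) : Prop :=
  T.Nonempty ∧ (∀ u ∈ T, ∀ v ∈ T, Relation.ReflTransGen r u v) ∧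
    ∀ T' : Set α, T ⊆ T' → (∀ u ∈ T', ∀ v ∈ T', Relation.ReflTransGen r u v) → T' = T

/-- `T` has no arcs out to vertices not in `T`. -/
def IsTerminal {α : Type*} (r : α → α → Prop) (T : Set α) : Prop :=
  ∀ u ∈ T, ∀ v, r u v → v ∈ T

/-- `Mon_1(C,D;i)`: monotone wind-1 homomorphisms `φ` with `φ c₀ = i`. -/
def Mon1 {m n : ℕ} (fC : ZMod m → Orient) (fD : ZMod n → Orient) (i : ZMod n) :
    Set (ZMod m → ZMod n) :=
  {φ | IsHom (cycRel fC) (cycRel fD) φ ∧ MonMap φ ∧ increase φ = (n : ℤ) ∧ φ 0 = i}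

/-- A one-step up edge: an edge from `φ` obtained by moving all the vertices of a
subpath of `C` mapped to a single vertex `d` up to `d + 1`. -/
def OneStepUp {m n : ℕ} (rC : ZMod m → ZMod m → Prop) (rD : ZMod n → ZMod n → Prop)
    (φ φ' : ZMod m → ZMod n) : Prop :=
  HomEdge rC rD φ φ' ∧
    ∃ (a : ZMod m) (k : ℕ) (d : ZMod n), k < m ∧
      (∀ j : ℕ, j ≤ k → φ (a + ((j : ℕ) : ZMod m)) = d) ∧
      ∀ c, φ' c = if ∃ j : ℕ, j ≤ k ∧ c = a + ((j : ℕ) : ZMod m) then d + 1 else φ c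

/-- The number of increasing edges of `φ` among the first `j` edges of `C`. -/
def incBefore {m n : ℕ} (φ : ZMod m → ZMod n) (j : ℕ) : ℕ :=
  ((Finset.range j).filter fun t =>
    φ (((t : ℕ) : ZMod m) + 1) = φ ((t : ℕ) : ZMod m) + 1).card

/-- One cutback-pushing step: `φ'` is obtained from `φ` by replacing the values of
`φ` on a cutback `c_a … c_{a+L}` by `φ a`. -/
def CutbackStep {m n : ℕ} (φ φ' : ZMod m → ZMod n) : Prop :=
  ∃ (a : ZMod m) (L : ℕ), L < m ∧ partialInc φ a L = 0 ∧
    (∀ j : ℕ, 0 < j → j < L → partialInc φ a j < 0) ∧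
    ∀ c, φ' c = if ∃ j : ℕ, j ≤ L ∧ c = a + ((j : ℕ) : ZMod m) then φ a else φ c

/-- `Mon_1^+(C,D;i)`: wind-1 homomorphisms whose monotone push-up is in `Mon_1(C,D;i)`. -/
def Mon1Plus {m n : ℕ} (fC : ZMod m → Orient) (fD : ZMod n → Orient) (i : ZMod n) :
    Set (ZMod m → ZMod n) :=
  {φ | IsHom (cycRel fC) (cycRel fD) φ ∧ increase φ = (n : ℤ) ∧
    ∃ ψ ∈ Mon1 fC fD i, Relation.ReflTransGen CutbackStep φ ψ}

lemma Orient.eq_minus_of_not_fwd {o : Orient} (h : ¬ o.fwd) : o = Orient.minus := by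
  cases o <;> simp_all [Orient.fwd]

lemma Orient.eq_star_of_fwd_of_bwd {o : Orient} (hf : o.fwd) (hb : o.bwd) : o = Orient.star := by
  cases o <;> simp_all [Orient.fwd, Orient.bwd]

lemma ZMod.natCast_ne_zero_of_pos_of_lt {n k : ℕ} (hk : 0 < k) (hkn : k < n) :
    (k : ZMod n) ≠ 0 := by
  rw [Ne, ZMod.natCast_eq_zero_iff]
  exact fun h => absurd (Nat.le_of_dvd hk h) (by omega)

lemma ZMod.add_one_ne_self {n : ℕ} (hn : 2 ≤ n) (a : ZMod n) : a + 1 ≠ a := by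
  have h1 : ((1 : ℕ) : ZMod n) ≠ 0 := ZMod.natCast_ne_zero_of_pos_of_lt one_pos hn
  rw [Nat.cast_one] at h1
  exact fun h => h1 (add_eq_left.mp h)

lemma ZMod.add_one_add_one_ne_self {n : ℕ} (hn : 3 ≤ n) (a : ZMod n) : a + 1 + 1 ≠ a := by
  have h2 : ((2 : ℕ) : ZMod n) ≠ 0 := ZMod.natCast_ne_zero_of_pos_of_lt two_pos hn
  rw [Nat.cast_ofNat] at h2
  rw [add_assoc, one_add_one_eq_two]
  exact fun h => h2 (add_eq_left.mp h)

section cycRel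

variable {n : ℕ} {f : ZMod n → Orient} {a : ZMod n}

lemma fwd_of_cycRel_add_one (hn : 3 ≤ n) (h : cycRel f a (a + 1)) : (f a).fwd := by
  rcases h with h | ⟨-, h⟩ | ⟨h, -⟩
  · exact absurd h.symm (ZMod.add_one_ne_self (by omega) a)
  · exact h
  · exact absurd h.symm (ZMod.add_one_add_one_ne_self hn a)

lemma bwd_of_cycRel_add_one_left (hn : 3 ≤ n) (h : cycRel f (a + 1) a) : (f a).bwd := by
  rcases h with h | ⟨h, -⟩ | ⟨-, h⟩
  · exact absurd h (ZMod.add_one_ne_self (by omega) a)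
  · exact absurd h.symm (ZMod.add_one_add_one_ne_self hn a)
  · exact h

lemma NonContractible.three_le (hD : NonContractible f) : 3 ≤ n := by
  rcases hD with h | ⟨h, -⟩ <;> omega

/-- For `n = 3` such an arc would run backward, as `a + 1 + 1 = a - 1`. -/
lemma NonContractible.not_cycRel_add_one_add_one (hD : NonContractible f) (hf : (f a).fwd) :
    ¬ cycRel f a (a + 1 + 1) := by
  have hn := hD.three_le
  rintro (h | ⟨h, -⟩ | ⟨h, hb⟩)
  · exact ZMod.add_one_add_one_ne_self hn a h.symm
  · exact ZMod.add_one_ne_self (by omega) a (add_right_cancel h)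
  · have h3 : ((3 : ℕ) : ZMod n) = 0 := by
      push_cast
      linear_combination -h
    have hn3 : n = 3 :=
      le_antisymm (Nat.le_of_dvd three_pos ((ZMod.natCast_eq_zero_iff 3 n).mp h3)) hn
    rcases hD with h4 | ⟨-, hplus | hminus⟩
    · omega
    · simp [hplus, Orient.bwd] at hb
    · simp [hminus, Orient.fwd] at hf

end cycRel

lemma HomArc.fwd_of_moves_up {m n : ℕ} {fC : ZMod m → Orient} {fD : ZMod n → Orient}
    {φ φ' : ZMod m → ZMod n} (hn : 3 ≤ n) (harc : HomArc (cycRel fC) (cycRel fD) φ φ')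
    {c : ZMod m} (hc : φ' c = φ c + 1) : (fD (φ c)).fwd :=
  fwd_of_cycRel_add_one hn (hc ▸ harc c c (Or.inl rfl))

theorem increasing_edge_in_moved_set_general (m n : ℕ)
    (fC : ZMod m → Orient) (fD : ZMod n → Orient) (hD : NonContractible fD)
    (φ φ' : ZMod m → ZMod n)
    (hφ' : IsHom (cycRel fC) (cycRel fD) φ')
    (harc : HomArc (cycRel fC) (cycRel fD) φ φ')
    (i : ZMod m)
    (hiT : φ' i = φ i + 1) (hi1T : φ' (i + 1) = φ (i + 1) + 1)
    (hinc : φ (i + 1) = φ i + 1) :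
    fC i = Orient.minus ∧ fD (φ (i + 1)) = Orient.star := by
  have hn := hD.three_le
  have hC : fC i = Orient.minus := by
    refine Orient.eq_minus_of_not_fwd fun hfwd => ?_
    have h := harc i (i + 1) (Or.inr (Or.inl ⟨rfl, hfwd⟩))
    rw [hi1T, hinc] at h
    exact hD.not_cycRel_add_one_add_one (harc.fwd_of_moves_up hn hiT) h
  have hback : cycRel fC (i + 1) i := Or.inr (Or.inr ⟨rfl, by simp [hC, Orient.bwd]⟩)
  have h := hφ' (i + 1) i hback
  rw [hi1T, hiT, ← hinc] at h
  exact ⟨hC, Orient.eq_star_of_fwd_of_bwd (harc.fwd_of_moves_up hn hi1T)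
    (bwd_of_cycRel_add_one_left hn h)⟩

/-- if the moved set `T` of a non-refinable up edge `φ → φ'` (with `φ`
monotone) contains both endpoints of an increasing edge `c_i c_{i+1}` of `C`, then
that edge is a backwards (non-symmetric) edge of `C` and the edge of `D` between
`φ(c_{i+1})` and `φ(c_{i+1}) + 1` is symmetric. -/
theorem increasing_edge_in_moved_set (m n : ℕ) (hm : 3 ≤ m)
    (fC : ZMod m → Orient) (fD : ZMod n → Orient) (hD : NonContractible fD)
    (φ φ' : ZMod m → ZMod n)
    (hφ : IsHom (cycRel fC) (cycRel fD) φ) (hφ' : IsHom (cycRel fC) (cycRel fD) φ')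
    (hmon : MonMap φ)
    (harc : HomArc (cycRel fC) (cycRel fD) φ φ')
    (hup : MovesUpOnly φ φ')
    (hnr : NonRefinable (cycRel fC) (cycRel fD) φ φ')
    (i : ZMod m)
    (hiT : φ' i = φ i + 1) (hi1T : φ' (i + 1) = φ (i + 1) + 1)
    (hinc : φ (i + 1) = φ i + 1) :
    fC i = Orient.minus ∧ fD (φ (i + 1)) = Orient.star :=
  increasing_edge_in_moved_set_general m n fC fD hD φ φ' hφ' harc i hiT hi1T hinc

end Recon
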